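/- Let n ≥ 1 and set N = n+4. Work in Λ(ℂ^N). Let u be an element of the subalgebra generated by e_1, …, e_n that is homogeneous of odd degree, let w be an arbitrary element of Λ(ℂ^N), and suppose u∧w = c·e_1∧…∧e_n for some c ∈ ℂ. Let a_{ji} ∈ ℂ be given for n+1 ≤ j ≤ i ≤ n+4, set η_j := Σ_{i=j}^{n+4} a_{ji}·e_i and R := η_{n+1}∧η_{n+2} + η_{n+2}∧η_{n+3} + η_{n+3}∧η_{n+4}. Then for every element D of Λ(ℂ^N), (u∧R) ∧ (w∧R − u∧D) = 2·c·a_{n+1,n+1}·a_{n+2,n+2}·a_{n+3,n+3}·a_{n+4,n+4}·e_1∧…∧e_{n+4}. -/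

import Mathlib

/-- The 1-based `i`-th standard basis vector of `ℂ^N`, viewed inside the
exterior algebra `Λ(ℂ^N)` via the canonical inclusion `ι`. -/
noncomputable def e (N : ℕ) (i : ℕ) : ExteriorAlgebra ℂ (Fin N → ℂ) :=
  ExteriorAlgebra.ι ℂ (fun k : Fin N => if (k : ℕ) + 1 = i then (1 : ℂ) else 0)

/-- The wedge product `e_a ∧ e_{a+1} ∧ … ∧ e_{a+n−1}` in `Λ(ℂ^N)`. -/
noncomputable def wedgeSeq (N a n : ℕ) : ExteriorAlgebra ℂ (Fin N → ℂ) :=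
  ((List.range' a n).map (e N)).prod

/-- The 1-form `η_j := Σ_{i=j}^{n+4} a_{ji}·e_i` in `Λ(ℂ^{n+4})`. -/
noncomputable def ηform (n : ℕ) (a : ℕ → ℕ → ℂ) (j : ℕ) :
    ExteriorAlgebra ℂ (Fin (n + 4) → ℂ) :=
  ∑ i ∈ Finset.Icc j (n + 4), a j i • e (n + 4) i

/-- `R := η_{n+1}∧η_{n+2} + η_{n+2}∧η_{n+3} + η_{n+3}∧η_{n+4}`. -/
noncomputable def Rform (n : ℕ) (a : ℕ → ℕ → ℂ) : ExteriorAlgebra ℂ (Fin (n + 4) → ℂ) :=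
  ηform n a (n + 1) * ηform n a (n + 2) + ηform n a (n + 2) * ηform n a (n + 3) +
    ηform n a (n + 3) * ηform n a (n + 4)

/-!
Since `u` is homogeneous of odd degree, `u ∧ u = 0`, and `R` is a sum of 2-forms, hence central.
So `(u∧R) ∧ (w∧R − u∧D) = (u∧w) ∧ (R∧R)`. In `R∧R` every cross term repeats a vector except
`(η_{n+1}∧η_{n+2}) ∧ (η_{n+3}∧η_{n+4})`, which occurs twice. The `η`'s are triangular in the
`e`'s, so wedging `η_j` onto `e_{j+1}∧…∧e_{n+4}` kills every term of `η_j` but `a_{jj}·e_j`;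
hence `η_{n+1}∧η_{n+2}∧η_{n+3}∧η_{n+4}` is the product of the diagonal entries times
`e_{n+1}∧e_{n+2}∧e_{n+3}∧e_{n+4}`.
-/

open ExteriorAlgebra

namespace ExteriorAlgebra

variable {R M : Type*} [CommRing R] [AddCommGroup M] [Module R M]

theorem ι_mul_ι_anticomm (x y : M) : ι R x * ι R y = -(ι R y * ι R x) :=
  eq_neg_of_add_eq_zero_left (ι_add_mul_swap x y)

theorem commute_ι_mul_ι (x y : M) (z : ExteriorAlgebra R M) : Commute (ι R x * ι R y) z := by
  induction z using ExteriorAlgebra.induction with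
  | algebraMap r => exact (Algebra.commute_algebraMap_left r (ι R x * ι R y)).symm
  | ι m =>
    simp only [Commute, SemiconjBy, mul_assoc, ι_mul_ι_anticomm y m, mul_neg, neg_mul,
      ← mul_assoc (ι R x) (ι R m), ι_mul_ι_anticomm x m, neg_neg]
  | mul a b ha hb => exact ha.mul_right hb
  | add a b ha hb => exact ha.add_right hb

theorem mul_ι_of_mem_pow {k : ℕ} {u : ExteriorAlgebra R M}
    (hu : u ∈ LinearMap.range (ι R : M →ₗ[R] ExteriorAlgebra R M) ^ k) (m : M) :
    u * ι R m = (-1 : R) ^ k • (ι R m * u) := by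
  induction hu using Submodule.pow_induction_on_right' with
  | algebraMap r => rw [pow_zero, one_smul, Algebra.commutes]
  | add x y i _ _ ihx ihy => rw [add_mul, ihx, ihy, ← smul_add, mul_add]
  | mul_mem i x _ ih _ hv =>
    obtain ⟨v, rfl⟩ := hv
    rw [mul_assoc, ι_mul_ι_anticomm v m, mul_neg, ← mul_assoc, ih, pow_succ, mul_smul,
      neg_one_smul, smul_mul_assoc, mul_assoc, smul_neg]

theorem mul_comm_of_mem_pow {k j : ℕ} {u v : ExteriorAlgebra R M}
    (hu : u ∈ LinearMap.range (ι R : M →ₗ[R] ExteriorAlgebra R M) ^ k)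
    (hv : v ∈ LinearMap.range (ι R : M →ₗ[R] ExteriorAlgebra R M) ^ j) :
    u * v = (-1 : R) ^ (k * j) • (v * u) := by
  induction hv using Submodule.pow_induction_on_right' with
  | algebraMap r => rw [Nat.mul_zero, pow_zero, one_smul, Algebra.commutes]
  | add x y i _ _ ihx ihy => rw [mul_add, ihx, ihy, ← smul_add, add_mul]
  | mul_mem i x _ ih _ hm =>
    obtain ⟨m, rfl⟩ := hm
    rw [← mul_assoc, ih, smul_mul_assoc, mul_assoc, mul_ι_of_mem_pow hu, Nat.mul_succ, pow_add,
      mul_smul, mul_smul_comm, ← mul_assoc]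

theorem mul_self_eq_zero_of_odd (h2 : IsUnit (2 : R)) {k : ℕ} (hk : Odd k)
    {u : ExteriorAlgebra R M} (hu : u ∈ LinearMap.range (ι R : M →ₗ[R] ExteriorAlgebra R M) ^ k) :
    u * u = 0 := by
  have hanti : u * u = -(u * u) := by
    simpa [(hk.mul hk).neg_one_pow] using mul_comm_of_mem_pow hu hu
  refine h2.smul_eq_zero.mp ?_
  rw [two_smul]
  nth_rewrite 1 [hanti]
  exact neg_add_cancel _

theorem mul_self_ι_mul_ι (x y : M) : ι R x * ι R y * (ι R x * ι R y) = 0 := by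
  rw [mul_assoc, ← mul_assoc (ι R y), ι_mul_ι_anticomm y x, neg_mul, mul_assoc, ι_sq_zero,
    mul_zero, neg_zero, mul_zero]

theorem ι_mul_ι_mul_ι_mul_ι_self_middle (x y z : M) : ι R x * ι R y * (ι R y * ι R z) = 0 := by
  rw [mul_assoc, ← mul_assoc (ι R y), ι_sq_zero, zero_mul, mul_zero]

theorem chain_two_forms_mul_self (x₁ x₂ x₃ x₄ : M) :
    (ι R x₁ * ι R x₂ + ι R x₂ * ι R x₃ + ι R x₃ * ι R x₄) *
        (ι R x₁ * ι R x₂ + ι R x₂ * ι R x₃ + ι R x₃ * ι R x₄) =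
      (2 : R) • (ι R x₁ * ι R x₂ * (ι R x₃ * ι R x₄)) := by
  have h21 := (commute_ι_mul_ι x₂ x₃ (ι R x₁ * ι R x₂)).eq
  have h31 := (commute_ι_mul_ι x₃ x₄ (ι R x₁ * ι R x₂)).eq
  have h32 := (commute_ι_mul_ι x₃ x₄ (ι R x₂ * ι R x₃)).eq
  simp only [add_mul, mul_add, h21, h31, h32, mul_self_ι_mul_ι,
    ι_mul_ι_mul_ι_mul_ι_self_middle, zero_add, add_zero, two_smul]

end ExteriorAlgebra

theorem e_mem_range_ι (N i : ℕ) :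
    e N i ∈ LinearMap.range (ι ℂ : (Fin N → ℂ) →ₗ[ℂ] ExteriorAlgebra ℂ (Fin N → ℂ)) :=
  LinearMap.mem_range_self _ _

theorem ηform_mem_range_ι (n : ℕ) (a : ℕ → ℕ → ℂ) (j : ℕ) :
    ηform n a j ∈ LinearMap.range (ι ℂ : (Fin (n + 4) → ℂ) →ₗ[ℂ] _) :=
  Submodule.sum_mem _ fun i _ ↦ Submodule.smul_mem _ _ (e_mem_range_ι _ i)

theorem wedgeSeq_zero (N a : ℕ) : wedgeSeq N a 0 = 1 := rfl

theorem wedgeSeq_succ (N a m : ℕ) : wedgeSeq N a (m + 1) = e N a * wedgeSeq N (a + 1) m := by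
  simp only [wedgeSeq, List.range'_succ, List.map_cons, List.prod_cons]

theorem wedgeSeq_add (N a m k : ℕ) :
    wedgeSeq N a (m + k) = wedgeSeq N a m * wedgeSeq N (a + m) k := by
  simp only [wedgeSeq, ← List.range'_append_1, List.map_append, List.prod_append]

theorem e_mul_wedgeSeq_of_mem {N a m i : ℕ} (hai : a ≤ i) (hia : i < a + m) :
    e N i * wedgeSeq N a m = 0 := by
  induction m generalizing a with
  | zero => omega
  | succ m ih =>
    rw [wedgeSeq_succ, ← mul_assoc]
    obtain rfl | hai := hai.eq_or_lt
    · rw [e, ι_sq_zero, zero_mul]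
    · rw [show e N i * e N a = -(e N a * e N i) from ι_mul_ι_anticomm _ _, neg_mul, mul_assoc,
        ih hai (by omega), mul_zero, neg_zero]

theorem ηform_mul_wedgeSeq (n : ℕ) (a : ℕ → ℕ → ℂ) {j m : ℕ} (hjm : j + m = n + 4) :
    ηform n a j * wedgeSeq (n + 4) (j + 1) m = a j j • wedgeSeq (n + 4) j (m + 1) := by
  rw [ηform, ← Finset.insert_Icc_add_one_left_eq_Icc (by omega), Finset.sum_insert (by simp),
    add_mul, Finset.sum_mul, Finset.sum_eq_zero, add_zero, smul_mul_assoc, wedgeSeq_succ]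
  intro i hi
  rw [Finset.mem_Icc] at hi
  rw [smul_mul_assoc, e_mul_wedgeSeq_of_mem hi.1 (by omega), smul_zero]

theorem ηform_mul_ηform_mul_ηform_mul_ηform (n : ℕ) (a : ℕ → ℕ → ℂ) :
    ηform n a (n + 1) * ηform n a (n + 2) * (ηform n a (n + 3) * ηform n a (n + 4)) =
      (a (n + 1) (n + 1) * a (n + 2) (n + 2) * a (n + 3) (n + 3) * a (n + 4) (n + 4)) •
        wedgeSeq (n + 4) (n + 1) 4 := by
  have h4 : ηform n a (n + 4) = a (n + 4) (n + 4) • wedgeSeq (n + 4) (n + 4) 1 := by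
    simpa [wedgeSeq_zero] using ηform_mul_wedgeSeq n a (j := n + 4) (m := 0) rfl
  have h3 : ηform n a (n + 3) * wedgeSeq (n + 4) (n + 4) 1 =
      a (n + 3) (n + 3) • wedgeSeq (n + 4) (n + 3) 2 := ηform_mul_wedgeSeq n a (by omega)
  have h2 : ηform n a (n + 2) * wedgeSeq (n + 4) (n + 3) 2 =
      a (n + 2) (n + 2) • wedgeSeq (n + 4) (n + 2) 3 := ηform_mul_wedgeSeq n a (by omega)
  have h1 : ηform n a (n + 1) * wedgeSeq (n + 4) (n + 2) 3 =
      a (n + 1) (n + 1) • wedgeSeq (n + 4) (n + 1) 4 := ηform_mul_wedgeSeq n a (by omega)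
  simp only [mul_assoc, h4, mul_smul_comm, h3, h2, h1, smul_smul]
  congr 1
  ring

theorem Rform_commute (n : ℕ) (a : ℕ → ℕ → ℂ) (z : ExteriorAlgebra ℂ (Fin (n + 4) → ℂ)) :
    Commute (Rform n a) z := by
  obtain ⟨v₁, h₁⟩ := ηform_mem_range_ι n a (n + 1)
  obtain ⟨v₂, h₂⟩ := ηform_mem_range_ι n a (n + 2)
  obtain ⟨v₃, h₃⟩ := ηform_mem_range_ι n a (n + 3)
  obtain ⟨v₄, h₄⟩ := ηform_mem_range_ι n a (n + 4)
  rw [Rform, ← h₁, ← h₂, ← h₃, ← h₄]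
  exact ((commute_ι_mul_ι v₁ v₂ z).add_left (commute_ι_mul_ι v₂ v₃ z)).add_left
    (commute_ι_mul_ι v₃ v₄ z)

theorem Rform_mul_self (n : ℕ) (a : ℕ → ℕ → ℂ) :
    Rform n a * Rform n a =
      (2 * a (n + 1) (n + 1) * a (n + 2) (n + 2) * a (n + 3) (n + 3) * a (n + 4) (n + 4)) •
        wedgeSeq (n + 4) (n + 1) 4 := by
  obtain ⟨v₁, h₁⟩ := ηform_mem_range_ι n a (n + 1)
  obtain ⟨v₂, h₂⟩ := ηform_mem_range_ι n a (n + 2)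
  obtain ⟨v₃, h₃⟩ := ηform_mem_range_ι n a (n + 3)
  obtain ⟨v₄, h₄⟩ := ηform_mem_range_ι n a (n + 4)
  rw [Rform, ← h₁, ← h₂, ← h₃, ← h₄, chain_two_forms_mul_self, h₁, h₂, h₃, h₄,
    ηform_mul_ηform_mul_ηform_mul_ηform, smul_smul]
  congr 1
  ring

theorem stmt_11_general (n : ℕ)
    (u w : ExteriorAlgebra ℂ (Fin (n + 4) → ℂ)) (c : ℂ)
    (hu_hom : ∃ k, Odd k ∧ u ∈ (LinearMap.range (ExteriorAlgebra.ι ℂ :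
      (Fin (n + 4) → ℂ) →ₗ[ℂ] ExteriorAlgebra ℂ (Fin (n + 4) → ℂ))) ^ k)
    (huw : u * w = c • wedgeSeq (n + 4) 1 n)
    (a : ℕ → ℕ → ℂ) (D : ExteriorAlgebra ℂ (Fin (n + 4) → ℂ)) :
    (u * Rform n a) * (w * Rform n a - u * D) =
      (2 * c * a (n + 1) (n + 1) * a (n + 2) (n + 2) * a (n + 3) (n + 3) *
        a (n + 4) (n + 4)) • wedgeSeq (n + 4) 1 (n + 4) := by
  obtain ⟨k, hk, hu⟩ := hu_hom
  have huu : u * u = 0 := mul_self_eq_zero_of_odd two_ne_zero.isUnit hk hu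
  calc (u * Rform n a) * (w * Rform n a - u * D)
      = u * w * (Rform n a * Rform n a) - u * u * (Rform n a * D) := by
        rw [mul_sub, (Rform_commute n a w).mul_mul_mul_comm,
          (Rform_commute n a u).mul_mul_mul_comm]
    _ = (2 * c * a (n + 1) (n + 1) * a (n + 2) (n + 2) * a (n + 3) (n + 3) *
        a (n + 4) (n + 4)) • wedgeSeq (n + 4) 1 (n + 4) := by
        rw [huu, zero_mul, sub_zero, huw, Rform_mul_self, smul_mul_smul_comm,
          wedgeSeq_add _ 1 n 4, add_comm 1 n]
        congr 1
        ring

/-- in `Λ(ℂ^{n+4})`, if `u` lies in the subalgebra generated by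
`e_1,…,e_n` and is homogeneous of odd degree, and `u∧w = c·e_1∧…∧e_n`, then for all `D`:
`(u∧R) ∧ (w∧R − u∧D) = 2c·a_{n+1,n+1}·a_{n+2,n+2}·a_{n+3,n+3}·a_{n+4,n+4}·e_1∧…∧e_{n+4}`. -/
theorem stmt_11 (n : ℕ) (hn : 1 ≤ n)
    (u w : ExteriorAlgebra ℂ (Fin (n + 4) → ℂ)) (c : ℂ)
    (hu_alg : u ∈ Algebra.adjoin ℂ {x | ∃ i, 1 ≤ i ∧ i ≤ n ∧ x = e (n + 4) i})
    (hu_hom : ∃ k, Odd k ∧ u ∈ (LinearMap.range (ExteriorAlgebra.ι ℂ :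
      (Fin (n + 4) → ℂ) →ₗ[ℂ] ExteriorAlgebra ℂ (Fin (n + 4) → ℂ))) ^ k)
    (huw : u * w = c • wedgeSeq (n + 4) 1 n)
    (a : ℕ → ℕ → ℂ) (D : ExteriorAlgebra ℂ (Fin (n + 4) → ℂ)) :
    (u * Rform n a) * (w * Rform n a - u * D) =
      (2 * c * a (n + 1) (n + 1) * a (n + 2) (n + 2) * a (n + 3) (n + 3) *
        a (n + 4) (n + 4)) • wedgeSeq (n + 4) 1 (n + 4) :=
  stmt_11_general n u w c hu_hom huw a D
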